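/- arXiv:1906.07054 — 2 statements merged into one kernel-verified Lean document; each statement's English description precedes it below -/
import Mathlib

section
/- Hodge decomposition: for a finite-dimensional chain complex of inner product spaces Ω^k with maps d^k : Ω^k → Ω^{k+1} satisfying d^{k+1}∘d^k = 0 and adjoints δ^{k+1}, one has the orthogonal direct sum decomposition Ω^k = image(d^{k-1}) ⊕ image(δ^{k+1}) ⊕ H^k, where H^k = {ω ∈ Ω^k : d^k ω = 0 and δ^k ω = 0}. -/
open scoped RealInnerProductSpace

/-- Discrete Hodge decomposition: for a finite-dimensional cochain complex of real
inner product spaces `Ω` with `d ∘ d = 0` and adjoints `δ`, the space `Ω^{k+1}`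
is the orthogonal direct sum of `range d^k`, `range δ^{k+2}` and the harmonic
space `H^{k+1} = ker d^{k+1} ∩ ker δ^{k+1}`.
Here `δ k : Ω (k+1) →ₗ Ω k` plays the role of `δ^{k+1}`. -/
theorem hodge_decomposition (Ω : ℕ → Type*)
    [∀ k, NormedAddCommGroup (Ω k)] [∀ k, InnerProductSpace ℝ (Ω k)]
    [∀ k, FiniteDimensional ℝ (Ω k)]
    (d : ∀ k, Ω k →ₗ[ℝ] Ω (k + 1)) (δ : ∀ k, Ω (k + 1) →ₗ[ℝ] Ω k)
    (hdd : ∀ k, (d (k + 1)).comp (d k) = 0)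
    (hadj : ∀ k (ω₁ : Ω k) (ω₂ : Ω (k + 1)), ⟪d k ω₁, ω₂⟫ = ⟪ω₁, δ k ω₂⟫)
    (k : ℕ) :
    (∀ x ∈ LinearMap.range (d k), ∀ y ∈ LinearMap.range (δ (k + 1)), ⟪x, y⟫ = 0) ∧
    (∀ x ∈ LinearMap.range (d k),
      ∀ y ∈ (LinearMap.ker (d (k + 1)) ⊓ LinearMap.ker (δ k)), ⟪x, y⟫ = 0) ∧
    (∀ x ∈ LinearMap.range (δ (k + 1)),
      ∀ y ∈ (LinearMap.ker (d (k + 1)) ⊓ LinearMap.ker (δ k)), ⟪x, y⟫ = 0) ∧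
    LinearMap.range (d k) ⊔ LinearMap.range (δ (k + 1)) ⊔
      (LinearMap.ker (d (k + 1)) ⊓ LinearMap.ker (δ k)) = ⊤ := by
  refine ⟨?_, ?_, ?_, ?_⟩
  · rintro x ⟨a, rfl⟩ y ⟨b, rfl⟩
    rw [← hadj (k + 1) (d k a) b]
    have : d (k + 1) (d k a) = 0 := by
      have := congrFun (congrArg (fun f => f.toFun) (hdd k)) a
      simpa using this
    rw [this, inner_zero_left]
  · rintro x ⟨a, rfl⟩ y ⟨-, hy2⟩
    rw [hadj k a y, hy2, inner_zero_right]
  · rintro x ⟨b, rfl⟩ y ⟨hy1, -⟩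
    rw [real_inner_comm, ← hadj (k + 1) y b, hy1, inner_zero_left]
  · rw [← Submodule.orthogonal_eq_bot_iff]
    rw [Submodule.eq_bot_iff]
    intro y hy
    simp only [Submodule.mem_orthogonal] at hy
    have hd : d (k + 1) y = 0 := by
      rw [← @inner_self_eq_zero ℝ]
      rw [hadj (k + 1) y (d (k + 1) y), real_inner_comm]
      exact hy (δ (k + 1) (d (k + 1) y))
        (Submodule.mem_sup_left (Submodule.mem_sup_right ⟨_, rfl⟩))
    have hδ : δ k y = 0 := by
      rw [← @inner_self_eq_zero ℝ]
      rw [← hadj k (δ k y) y]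
      exact hy (d k (δ k y))
        (Submodule.mem_sup_left (Submodule.mem_sup_left ⟨_, rfl⟩))
    have : y ∈ LinearMap.ker (d (k + 1)) ⊓ LinearMap.ker (δ k) := ⟨hd, hδ⟩
    exact (@inner_self_eq_zero ℝ _ _ _ _ y).mp (hy y (Submodule.mem_sup_right this))
end

section
/- The space of harmonic 1-forms on the discrete torus ℤ^n_N (N ≥ 2) has dimension exactly n, and is spanned by the fields φ^{(i)}(x, x+e_j) = δ_{ij}, i = 1,…,n. -/
/-- Energy argument: a discrete harmonic function on the torus has vanishing gradient. -/
lemma aux_energy {n N : ℕ} [NeZero N] (F : (Fin n → ZMod N) → ℝ)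
    (h : ∀ x, ∑ l : Fin n,
      ((F (x + Pi.single l 1) - F x) - (F x - F (x - Pi.single l 1))) = 0) :
    ∀ (x : Fin n → ZMod N) (l : Fin n), F (x + Pi.single l 1) = F x := by
  have key : ∀ l : Fin n, ∑ x : Fin n → ZMod N, F x * (F x - F (x - Pi.single l 1))
      = ∑ x : Fin n → ZMod N, F (x + Pi.single l 1) * (F (x + Pi.single l 1) - F x) := by
    intro l
    refine (Equiv.sum_comp (Equiv.addRight (Pi.single l 1))
      (fun y => F y * (F y - F (y - Pi.single l 1)))).symm.trans ?_
    refine Finset.sum_congr rfl fun x _ => ?_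
    simp [add_sub_cancel_right]
  have h0 : ∑ x : Fin n → ZMod N, F x * (∑ l : Fin n,
      ((F (x + Pi.single l 1) - F x) - (F x - F (x - Pi.single l 1)))) = 0 := by
    refine Finset.sum_eq_zero fun x _ => ?_
    rw [h x, mul_zero]
  have h1 : ∑ l : Fin n, ∑ x : Fin n → ZMod N, (F (x + Pi.single l 1) - F x) ^ 2 = 0 := by
    have expand : ∀ l : Fin n, ∑ x : Fin n → ZMod N, (F (x + Pi.single l 1) - F x) ^ 2
        = ∑ x : Fin n → ZMod N, (F x * (F x - F (x - Pi.single l 1))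
            - F x * (F (x + Pi.single l 1) - F x)) := by
      intro l
      rw [Finset.sum_sub_distrib, key l, ← Finset.sum_sub_distrib]
      refine Finset.sum_congr rfl fun x _ => ?_
      ring
    calc ∑ l : Fin n, ∑ x : Fin n → ZMod N, (F (x + Pi.single l 1) - F x) ^ 2
        = ∑ l : Fin n, ∑ x : Fin n → ZMod N, (F x * (F x - F (x - Pi.single l 1))
            - F x * (F (x + Pi.single l 1) - F x)) := by
          exact Finset.sum_congr rfl fun l _ => expand l
      _ = ∑ x : Fin n → ZMod N, ∑ l : Fin n, (F x * (F x - F (x - Pi.single l 1))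
            - F x * (F (x + Pi.single l 1) - F x)) := Finset.sum_comm
      _ = - ∑ x : Fin n → ZMod N, F x * (∑ l : Fin n,
            ((F (x + Pi.single l 1) - F x) - (F x - F (x - Pi.single l 1)))) := by
          rw [← Finset.sum_neg_distrib]
          refine Finset.sum_congr rfl fun x _ => ?_
          rw [Finset.mul_sum, ← Finset.sum_neg_distrib]
          refine Finset.sum_congr rfl fun l _ => ?_
          ring
      _ = 0 := by rw [h0, neg_zero]
  intro x l
  have hl : ∑ x : Fin n → ZMod N, (F (x + Pi.single l 1) - F x) ^ 2 = 0 := by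
    have := (Finset.sum_eq_zero_iff_of_nonneg (fun l _ =>
      Finset.sum_nonneg fun x _ => sq_nonneg _)).mp h1
    exact this l (Finset.mem_univ l)
  have hx : (F (x + Pi.single l 1) - F x) ^ 2 = 0 :=
    (Finset.sum_eq_zero_iff_of_nonneg (fun x _ => sq_nonneg _)).mp hl x (Finset.mem_univ x)
  have := pow_eq_zero_iff (n := 2) (by norm_num) |>.mp hx
  linarith [sub_eq_zero.mp this]

/-- A function on the torus invariant under unit steps is constant. -/
lemma aux_reach {n N : ℕ} [NeZero N] (f : (Fin n → ZMod N) → ℝ)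
    (h : ∀ (x : Fin n → ZMod N) (l : Fin n), f (x + Pi.single l 1) = f x) :
    ∀ x, f x = f 0 := by
  have hns : ∀ (c : ℕ) (x : Fin n → ZMod N) (l : Fin n),
      f (x + c • Pi.single l 1) = f x := by
    intro c
    induction c with
    | zero => simp
    | succ c ih =>
      intro x l
      have e : x + (c + 1) • (Pi.single l 1 : Fin n → ZMod N)
          = (x + Pi.single l 1) + c • Pi.single l 1 := by
        rw [succ_nsmul]; abel
      rw [e, ih, h]
  have hsingle : ∀ (x : Fin n → ZMod N) (l : Fin n) (a : ZMod N),
      f (x + Pi.single l a) = f x := by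
    intro x l a
    have e : (Pi.single l a : Fin n → ZMod N) = a.val • (Pi.single l 1 : Fin n → ZMod N) := by
      ext m
      by_cases hm : m = l
      · subst hm
        simp [nsmul_eq_mul, ZMod.natCast_val, ZMod.cast_id]
      · simp [Pi.single_eq_of_ne hm]
    rw [e, hns]
  have key : ∀ (s : Finset (Fin n)) (x y : Fin n → ZMod N),
      f (x + ∑ l ∈ s, Pi.single l (y l)) = f x := by
    intro s
    induction s using Finset.induction with
    | empty => simp
    | @insert a s ha ih =>
      intro x y
      rw [Finset.sum_insert ha]
      have e : x + (Pi.single a (y a) + ∑ l ∈ s, Pi.single l (y l))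
          = (x + ∑ l ∈ s, Pi.single l (y l)) + Pi.single a (y a) := by abel
      rw [e, hsingle, ih]
  intro x
  have hx : x = 0 + ∑ l : Fin n, Pi.single l (x l) := by
    funext m
    simp [Fintype.sum_pi_single]
  rw [hx, key]

/-- The space of harmonic 1-forms on the discrete torus `ℤⁿ_N` (`N ≥ 2`) — edge fields
`j` (with `j x l` denoting `j(x, x+eₗ)`) whose discrete curl vanishes on every
elementary face and whose discrete divergence vanishes at every vertex — has dimension
exactly `n` and is spanned by the constant fields `φ⁽ⁱ⁾(x, x+eⱼ) = δᵢⱼ`. -/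
theorem harmonic_space_dim_n (n N : ℕ) [NeZero N] (hN : 2 ≤ N)
    (H : Submodule ℝ ((Fin n → ZMod N) → Fin n → ℝ))
    (hH : ∀ j : (Fin n → ZMod N) → Fin n → ℝ, j ∈ H ↔
      ((∀ (x : Fin n → ZMod N) (l m : Fin n),
        (j (x + Pi.single l 1) m - j x m) - (j (x + Pi.single m 1) l - j x l) = 0) ∧
      (∀ x : Fin n → ZMod N, ∑ l : Fin n, (j x l - j (x - Pi.single l 1) l) = 0))) :
    Module.finrank ℝ H = n ∧
    H = Submodule.span ℝ (Set.range fun i : Fin n =>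
      (fun _ l => if l = i then 1 else 0 : (Fin n → ZMod N) → Fin n → ℝ)) := by
  set Φ : Fin n → (Fin n → ZMod N) → Fin n → ℝ :=
    fun i => (fun _ l => if l = i then 1 else 0) with hΦ
  -- Each j in H is constant in x
  have hconst : ∀ j ∈ H, ∀ (x : Fin n → ZMod N) (m : Fin n), j x m = j 0 m := by
    intro j hj x m
    obtain ⟨hcurl, hdiv⟩ := (hH j).mp hj
    -- the component function is discrete harmonic
    have hharm : ∀ x : Fin n → ZMod N, ∑ l : Fin n,
        ((j (x + Pi.single l 1) m - j x m) - (j x m - j (x - Pi.single l 1) m)) = 0 := by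
      intro x
      have step1 : ∀ l : Fin n, j (x + Pi.single l 1) m - j x m
          = j (x + Pi.single m 1) l - j x l := fun l => by linarith [hcurl x l m]
      have step2 : ∀ l : Fin n, j x m - j (x - Pi.single l 1) m
          = j ((x + Pi.single m 1) - Pi.single l 1) l - j (x - Pi.single l 1) l := by
        intro l
        have h2 := hcurl (x - Pi.single l 1) l m
        have e1 : x - Pi.single l 1 + Pi.single l 1 = x := by abel
        have e2 : x - Pi.single l 1 + Pi.single m 1
            = (x + Pi.single m 1) - Pi.single l 1 := by abel
        rw [e1, e2] at h2
        linarith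
      calc ∑ l : Fin n, ((j (x + Pi.single l 1) m - j x m)
              - (j x m - j (x - Pi.single l 1) m))
          = ∑ l : Fin n, ((j (x + Pi.single m 1) l
              - j ((x + Pi.single m 1) - Pi.single l 1) l)
              - (j x l - j (x - Pi.single l 1) l)) := by
            refine Finset.sum_congr rfl fun l _ => ?_
            rw [step1 l, step2 l]; ring
        _ = (∑ l : Fin n, (j (x + Pi.single m 1) l
              - j ((x + Pi.single m 1) - Pi.single l 1) l))
              - ∑ l : Fin n, (j x l - j (x - Pi.single l 1) l) := by
            rw [Finset.sum_sub_distrib]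
        _ = 0 := by rw [hdiv (x + Pi.single m 1), hdiv x, sub_zero]
    have hstep := aux_energy (fun x => j x m) hharm
    exact aux_reach (fun x => j x m) hstep x
  -- The span equals H
  have hspan : H = Submodule.span ℝ (Set.range Φ) := by
    apply le_antisymm
    · intro j hj
      have hrepr : j = ∑ i : Fin n, j 0 i • Φ i := by
        funext x l
        have : (∑ i : Fin n, j 0 i • Φ i) x l = ∑ i : Fin n, j 0 i * (if l = i then 1 else 0) := by
          simp [hΦ, Finset.sum_apply]
        rw [this]
        rw [Finset.sum_congr rfl fun i _ => (mul_ite _ _ _ _ : _ = ite _ _ _)]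
        simp only [mul_one, mul_zero, Finset.sum_ite_eq, Finset.mem_univ, if_true]
        exact hconst j hj x l
      rw [hrepr]
      exact Submodule.sum_mem _ fun i _ =>
        Submodule.smul_mem _ _ (Submodule.subset_span ⟨i, rfl⟩)
    · rw [Submodule.span_le]
      rintro _ ⟨i, rfl⟩
      rw [SetLike.mem_coe, hH]
      constructor
      · intro x l m; simp [hΦ]
      · intro x; simp [hΦ]
  refine ⟨?_, hspan⟩
  -- dimension count: the Φ i are linearly independent
  have hli : LinearIndependent ℝ Φ := by
    have hcomp : (fun i => Φ i 0) = ⇑(Pi.basisFun ℝ (Fin n)) := by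
      funext i l
      simp [hΦ, Pi.single_apply]
    have : LinearIndependent ℝ (fun i =>
        (LinearMap.proj (R := ℝ) (φ := fun _ : Fin n → ZMod N => Fin n → ℝ) 0) (Φ i)) := by
      rw [show (fun i => (LinearMap.proj (R := ℝ)
        (φ := fun _ : Fin n → ZMod N => Fin n → ℝ) 0) (Φ i)) = fun i => Φ i 0 from rfl, hcomp]
      exact (Pi.basisFun ℝ (Fin n)).linearIndependent
    exact LinearIndependent.of_comp _ this
  rw [hspan, finrank_span_eq_card hli, Fintype.card_fin]
end
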